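/- Among all measurable functions g : [0,1]² → [0,1] with ∫∫ (g(x,y) - 1/2)² dx dy = K fixed (0 < K < 1/4), the minimum of ∫∫ I_0(g(x,y)) dx dy is attained by functions with |g(x,y) - 1/2| constant equal to √K almost everywhere; in particular I(g) ≥ I_0(1/2 + √K) for all admissible g. -/

import Mathlib

noncomputable def I0 (u : ℝ) : ℝ := (1/2) * (u * Real.log u + (1-u) * Real.log (1-u))

noncomputable def rateFn (g : ℝ → ℝ → ℝ) : ℝ :=
  ∫ x in (0:ℝ)..1, ∫ y in (0:ℝ)..1, I0 (g x y)

/-!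
Since `I0 (1 - u) = I0 u`, we have `I0 u = φ ((u - 1/2)²)` with `φ v = I0 (1/2 + √v)`, so the
lower bound is Jensen's inequality for `φ` with respect to Lebesgue measure on the unit square,
applied to `(g - 1/2)²`, which takes values in `[0, 1/4]`. The function `φ` is convex on
`[0, 1/4]`: its derivative is `ℓ(√v) / √v / 4` with `ℓ t = log (1/2 + t) - log (1/2 - t)`, and
`ℓ t / t` is nondecreasing on `(0, 1/2)` because `ℓ` is convex on `[0, 1/2)` with `ℓ 0 = 0`.
If `|g - 1/2| ≡ √K`, then `I0 ∘ g` is the constant `I0 (1/2 + √K)`.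
-/

open Real Set MeasureTheory

lemma I0_one_sub (u : ℝ) : I0 (1 - u) = I0 u := by
  unfold I0; ring_nf

lemma I0_eq_half_add_sqrt_sq (u : ℝ) : I0 u = I0 (1/2 + √((u - 1/2) ^ 2)) := by
  rw [sqrt_sq_eq_abs]
  rcases le_total (1/2) u with h | h
  · rw [abs_of_nonneg (by linarith)]; ring_nf
  · rw [abs_of_nonpos (by linarith), ← I0_one_sub]; ring_nf

lemma continuous_I0 : Continuous I0 := by
  unfold I0; fun_prop

lemma hasDerivAt_I0 {u : ℝ} (h0 : 0 < u) (h1 : u < 1) :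
    HasDerivAt I0 ((log u - log (1 - u)) / 2) u := by
  have hsub : HasDerivAt (fun u : ℝ => (1 - u) * log (1 - u)) (-(log (1 - u) + 1)) u := by
    have := (hasDerivAt_mul_log (sub_pos.2 h1).ne').comp u ((hasDerivAt_id u).const_sub 1)
    exact this.congr_deriv (by simp)
  unfold I0
  exact (((hasDerivAt_mul_log h0.ne').add hsub).const_mul (1/2 : ℝ)).congr_deriv (by ring)

lemma convexOn_logit_half :
    ConvexOn ℝ (Ico 0 (1/2)) (fun t => log (1/2 + t) - log (1/2 - t)) := by
  have hderiv : ∀ t ∈ Ioo (-(1/2) : ℝ) (1/2),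
      HasDerivAt (fun t => log (1/2 + t) - log (1/2 - t)) (1/4 - t ^ 2)⁻¹ t := by
    rintro t ⟨h0, h1⟩
    have hp : 1/2 + t ≠ 0 := by linarith
    have hm : 1/2 - t ≠ 0 := by linarith
    refine ((((hasDerivAt_id' t).const_add (1/2)).log hp).sub
      (((hasDerivAt_id' t).const_sub (1/2)).log hm)).congr_deriv ?_
    rw [show (1/4 : ℝ) - t ^ 2 = (1/2 + t) * (1/2 - t) by ring, div_sub_div _ _ hp hm]
    ring
  apply MonotoneOn.convexOn_of_deriv (convex_Ico 0 (1/2))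
  · exact fun t ht => (hderiv t ⟨by linarith [ht.1], ht.2⟩).continuousAt.continuousWithinAt
  · rw [interior_Ico]
    exact fun t ht =>
      (hderiv t ⟨by linarith [ht.1], ht.2⟩).differentiableAt.differentiableWithinAt
  · rw [interior_Ico]
    intro s hs t ht hst
    rw [(hderiv s ⟨by linarith [hs.1], hs.2⟩).deriv,
      (hderiv t ⟨by linarith [ht.1], ht.2⟩).deriv]
    have : 0 < 1/4 - t ^ 2 := by nlinarith [ht.1, ht.2]
    gcongr
    nlinarith [hs.1]

lemma monotoneOn_logit_half_div :
    MonotoneOn (fun t => (log (1/2 + t) - log (1/2 - t)) / t) (Ioo 0 (1/2)) := by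
  intro s hs t ht hst
  have := convexOn_logit_half.secant_mono (a := 0) ⟨le_rfl, by norm_num⟩
    (Ioo_subset_Ico_self hs) (Ioo_subset_Ico_self ht) hs.1.ne' ht.1.ne' hst
  simpa using this

lemma sqrt_lt_half {v : ℝ} (h : v < 1/4) : √v < 1/2 :=
  (sqrt_lt' (by norm_num)).2 (by linarith)

lemma hasDerivAt_I0_half_add_sqrt {v : ℝ} (h0 : 0 < v) (h1 : v < 1/4) :
    HasDerivAt (fun v => I0 (1/2 + √v))
      ((log (1/2 + √v) - log (1/2 - √v)) / √v / 4) v := by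
  have hs0 : 0 < √v := sqrt_pos.2 h0
  have := (hasDerivAt_I0 (u := 1/2 + √v) (by linarith) (by linarith [sqrt_lt_half h1])).comp v
    ((hasDerivAt_sqrt h0.ne').const_add (1/2))
  refine this.congr_deriv ?_
  rw [show 1 - (1/2 + √v) = 1/2 - √v by ring]
  field_simp
  ring

lemma convexOn_I0_half_add_sqrt : ConvexOn ℝ (Icc 0 (1/4)) (fun v => I0 (1/2 + √v)) := by
  apply MonotoneOn.convexOn_of_deriv (convex_Icc 0 (1/4))
  · exact (continuous_I0.comp (continuous_const.add continuous_sqrt)).continuousOn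
  · rw [interior_Icc]
    exact fun v hv =>
      (hasDerivAt_I0_half_add_sqrt hv.1 hv.2).differentiableAt.differentiableWithinAt
  · rw [interior_Icc]
    intro v hv w hw hvw
    rw [(hasDerivAt_I0_half_add_sqrt hv.1 hv.2).deriv,
      (hasDerivAt_I0_half_add_sqrt hw.1 hw.2).deriv]
    have hsqrt : ∀ {u : ℝ}, u ∈ Ioo (0 : ℝ) (1/4) → √u ∈ Ioo (0 : ℝ) (1/2) :=
      fun hu => ⟨sqrt_pos.2 hu.1, sqrt_lt_half hu.2⟩
    gcongr ?_ / 4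
    exact monotoneOn_logit_half_div (hsqrt hv) (hsqrt hw) (sqrt_le_sqrt hvw)

lemma integrable_of_forall_mem_isCompact {α : Type*} [MeasurableSpace α] {μ : Measure α}
    [IsFiniteMeasure μ] {F : α → ℝ} {t : Set ℝ} (hF : Measurable F) (ht : IsCompact t)
    (hFt : ∀ z, F z ∈ t) : Integrable F μ := by
  obtain ⟨C, hC⟩ := ht.exists_bound_of_continuousOn continuousOn_id
  exact Integrable.of_bound hF.aestronglyMeasurable C (ae_of_all _ fun z => hC _ (hFt z))

lemma intervalIntegral_intervalIntegral_eq_integral_prod {a b c d : ℝ} (hab : a ≤ b)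
    (hcd : c ≤ d) {F : ℝ → ℝ → ℝ}
    (hF : Integrable (Function.uncurry F)
      ((volume.restrict (Ioc a b)).prod (volume.restrict (Ioc c d)))) :
    ∫ x in a..b, ∫ y in c..d, F x y =
      ∫ z, Function.uncurry F z
        ∂(volume.restrict (Ioc a b)).prod (volume.restrict (Ioc c d)) := by
  simp only [intervalIntegral.integral_of_le hab, intervalIntegral.integral_of_le hcd]
  exact (integral_prod _ hF).symm

theorem ConvexOn.map_intervalIntegral_unitSquare_le {s : Set ℝ} {φ : ℝ → ℝ}
    (hφ : ConvexOn ℝ s φ) (hφc : Continuous φ) (hs : IsCompact s) {f : ℝ → ℝ → ℝ}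
    (hf : Measurable (Function.uncurry f)) (hfs : ∀ x y, f x y ∈ s) :
    φ (∫ x in (0:ℝ)..1, ∫ y in (0:ℝ)..1, f x y) ≤
      ∫ x in (0:ℝ)..1, ∫ y in (0:ℝ)..1, φ (f x y) := by
  set ν := volume.restrict (Ioc (0:ℝ) 1)
  have : IsProbabilityMeasure ν := ⟨by simp [ν]⟩
  have hfi : Integrable (Function.uncurry f) (ν.prod ν) :=
    integrable_of_forall_mem_isCompact hf hs fun z => hfs z.1 z.2
  have hφi : Integrable (Function.uncurry fun x y => φ (f x y)) (ν.prod ν) :=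
    integrable_of_forall_mem_isCompact (hφc.measurable.comp hf) (hs.image hφc)
      fun z => ⟨_, hfs z.1 z.2, rfl⟩
  rw [intervalIntegral_intervalIntegral_eq_integral_prod zero_le_one zero_le_one hfi,
    intervalIntegral_intervalIntegral_eq_integral_prod zero_le_one zero_le_one hφi]
  exact hφ.map_integral_le hφc.continuousOn hs.isClosed (ae_of_all _ fun z => hfs z.1 z.2)
    hfi hφi

theorem rate_function_two_values_optimal_general (K : ℝ) :
    (∀ g : ℝ → ℝ → ℝ, (Measurable fun q : ℝ × ℝ => g q.1 q.2) →
      (∀ x y, g x y ∈ Set.Icc (0:ℝ) 1) →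
      (∫ x in (0:ℝ)..1, ∫ y in (0:ℝ)..1, (g x y - 1/2) ^ 2) = K →
      I0 (1/2 + Real.sqrt K) ≤ rateFn g) ∧
    (∀ g : ℝ → ℝ → ℝ, (Measurable fun q : ℝ × ℝ => g q.1 q.2) →
      (∀ x y, g x y ∈ Set.Icc (0:ℝ) 1) →
      (∫ x in (0:ℝ)..1, ∫ y in (0:ℝ)..1, (g x y - 1/2) ^ 2) = K →
      (∀ x y, |g x y - 1/2| = Real.sqrt K) →
      rateFn g = I0 (1/2 + Real.sqrt K)) := by
  refine ⟨fun g hg hg01 hK => ?_, fun g _ _ _ habs => ?_⟩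
  · have hsq : ∀ x y, (g x y - 1/2) ^ 2 ∈ Icc (0 : ℝ) (1/4) := fun x y =>
      ⟨sq_nonneg _, by nlinarith [(hg01 x y).1, (hg01 x y).2]⟩
    have := convexOn_I0_half_add_sqrt.map_intervalIntegral_unitSquare_le
      (continuous_I0.comp (continuous_const.add continuous_sqrt)) isCompact_Icc
      ((hg.sub measurable_const).pow_const 2) hsq
    simpa only [hK, ← I0_eq_half_add_sqrt_sq, rateFn] using this
  · have hpt : ∀ x y, I0 (g x y) = I0 (1/2 + √K) := fun x y => by
      rw [I0_eq_half_add_sqrt_sq, sqrt_sq_eq_abs, habs]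
    simp [rateFn, hpt]

/-- Among measurable g : [0,1]² → [0,1] with ∫∫ (g - 1/2)² = K fixed, the rate function
    is minimized exactly by functions with |g - 1/2| ≡ √K: every admissible g satisfies
    I(g) ≥ I_0(1/2 + √K), and any admissible g with |g - 1/2| = √K attains this value. -/
theorem rate_function_two_values_optimal (K : ℝ) (hK : K ∈ Set.Ioo (0:ℝ) (1/4)) :
    (∀ g : ℝ → ℝ → ℝ, (Measurable fun q : ℝ × ℝ => g q.1 q.2) →
      (∀ x y, g x y ∈ Set.Icc (0:ℝ) 1) →
      (∫ x in (0:ℝ)..1, ∫ y in (0:ℝ)..1, (g x y - 1/2) ^ 2) = K →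
      I0 (1/2 + Real.sqrt K) ≤ rateFn g) ∧
    (∀ g : ℝ → ℝ → ℝ, (Measurable fun q : ℝ × ℝ => g q.1 q.2) →
      (∀ x y, g x y ∈ Set.Icc (0:ℝ) 1) →
      (∫ x in (0:ℝ)..1, ∫ y in (0:ℝ)..1, (g x y - 1/2) ^ 2) = K →
      (∀ x y, |g x y - 1/2| = Real.sqrt K) →
      rateFn g = I0 (1/2 + Real.sqrt K)) :=
  rate_function_two_values_optimal_general K
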